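/- Let k, ℓ > 0, let π1 ∈ T_k and π2 ∈ T_ℓ, and let 1 ≤ i ≤ slmax(π2). Then D(C2(π1, π2, i)) = (π1, π2). -/

import Mathlib

namespace TSP

theorem foldr_max_mem {α : Type} [LinearOrder α] (x : α) (l : List α) :
    l.foldr max x ∈ x :: l := by
  induction l with
  | nil => simp
  | cons a t ih =>
    simp only [List.foldr_cons]
    rcases max_choice a (t.foldr max x) with h | h <;> rw [h]
    · simp
    · rcases List.mem_cons.mp ih with h' | h'
      · rw [h']; simp
      · exact List.mem_cons.mpr (Or.inr (List.mem_cons.mpr (Or.inr h')))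

theorem length_takeWhile_lt {α : Type} [DecidableEq α] {m : α} {l : List α}
    (h : m ∈ l) : (l.takeWhile (· ≠ m)).length < l.length := by
  have hd : l.dropWhile (· ≠ m) ≠ [] := by
    intro hnil
    have := List.dropWhile_eq_nil_iff.mp hnil m h
    simp at this
  have hsum : (l.takeWhile (· ≠ m)).length + (l.dropWhile (· ≠ m)).length = l.length := by
    rw [← List.length_append, List.takeWhile_append_dropWhile]
  have : 0 < (l.dropWhile (· ≠ m)).length := List.length_pos_iff.mpr hd
  omega

theorem length_tail_dropWhile_lt {α : Type} [DecidableEq α] {m : α} {l : List α}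
    (h : l ≠ []) : ((l.dropWhile (· ≠ m)).tail).length < l.length := by
  have hsum : (l.takeWhile (· ≠ m)).length + (l.dropWhile (· ≠ m)).length = l.length := by
    rw [← List.length_append, List.takeWhile_append_dropWhile]
  have h2 : ((l.dropWhile (· ≠ m)).tail).length = (l.dropWhile (· ≠ m)).length - 1 :=
    List.length_tail
  have : 0 < l.length := List.length_pos_iff.mpr h
  omega

/-- The stack-sorting operator `S`: `S(ε) = ε`, and if `A` is nonempty with
largest element `m` and `A = A_L · (m) · A_R`, then `S(A) = S(A_L) · S(A_R) · (m)`. -/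
def S {α : Type} [LinearOrder α] : List α → List α
  | [] => []
  | x :: l =>
    let m := l.foldr max x
    S ((x :: l).takeWhile (· ≠ m)) ++ S (((x :: l).dropWhile (· ≠ m)).tail) ++ [m]
termination_by l => l.length
decreasing_by
  · exact length_takeWhile_lt (by simpa [List.foldr_attach] using foldr_max_mem x l)
  · exact length_tail_dropWhile_lt (by simp)

/-- The identity permutation `id_n = (1, 2, …, n)` as a list. -/
def idPerm (n : ℕ) : List ℕ := List.range' 1 n

/-- `l` is a permutation of `{1, …, n}` (viewed as a sequence). -/
def IsPermOf (n : ℕ) (l : List ℕ) : Prop := l.Perm (idPerm n)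

/-- `l` is a two-stack sortable permutation (of `{1, …, len l}`). -/
def Is2SS (l : List ℕ) : Prop := IsPermOf l.length l ∧ S (S l) = idPerm l.length

/-- `σ^{+k}`: add `k` to every entry. -/
def shift (k : ℕ) (l : List ℕ) : List ℕ := l.map (· + k)

/-- `σ^{+(k1,m,k2)}`: add `k1` to every entry strictly smaller than `m`, `k2` to the others. -/
def shift3 (k1 m k2 : ℕ) (l : List ℕ) : List ℕ :=
  l.map (fun a => if a < m then a + k1 else a + k2)

/-- Standardization `P(A)`: the permutation of `{1,…,len A}` in the same relative order. -/
def stand (l : List ℕ) : List ℕ := l.map (fun a => (l.filter (fun b => b ≤ a)).length)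

/-- Avoidance of the pattern 231: no positions `i < j < k` with `l(k) < l(i) < l(j)`. -/
def Avoids231 (l : List ℕ) : Prop :=
  ¬ ∃ i j k, i < j ∧ j < k ∧ k < l.length ∧
      l.getD k 0 < l.getD i 0 ∧ l.getD i 0 < l.getD j 0

/-- The list of values of the left-to-right maxima of `l`, in order. -/
def lrMaxima (l : List ℕ) : List ℕ :=
  ((List.range l.length).filter
    (fun i => (l.take i).all (fun b => b < l.getD i 0))).map (fun i => l.getD i 0)

/-- `lmax`: the number of left-to-right maxima. -/
def lmax (l : List ℕ) : ℕ :=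
  (List.range l.length).countP (fun i => (l.take i).all (fun b => b < l.getD i 0))

/-- `rmax`: the number of right-to-left maxima. -/
def rmax (l : List ℕ) : ℕ :=
  (List.range l.length).countP (fun i => (l.drop (i+1)).all (fun b => b < l.getD i 0))

/-- `asc`: the number of ascents. -/
def asc (l : List ℕ) : ℕ :=
  (List.range (l.length - 1)).countP (fun i => l.getD i 0 < l.getD (i+1) 0)

/-- `des`: the number of descents. -/
def des (l : List ℕ) : ℕ :=
  (List.range (l.length - 1)).countP (fun i => l.getD (i+1) 0 < l.getD i 0)

/-- `slmax(π)`: the number of left-to-right maxima of `S(π)`. -/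
def slmax (l : List ℕ) : ℕ := lmax (S l)

/-- `sldes(π)`: the number of entries `a` that precede `a - 1` in `S(π)`. -/
def sldes (l : List ℕ) : ℕ :=
  (List.range (S l).length).countP
    (fun i => ((S l).drop (i+1)).any (fun b => b + 1 = (S l).getD i 0))

/-- The construction `C1(π1, π2) = π1 · (k+ℓ+1) · π2^{+k}`. -/
def C1 (p1 p2 : List ℕ) : List ℕ :=
  p1 ++ (p1.length + p2.length + 1) :: shift p1.length p2

/-- The `i`-th left-to-right maximum `a_i` of `S(π2)` (1-indexed). -/
def lrm (p2 : List ℕ) (i : ℕ) : ℕ := (lrMaxima (S p2)).getD (i - 1) 0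

/-- The construction `C2(π1, π2, i) = π1^{+(0,k,a_i)} · (k+ℓ+1) · π2^{+(k-1,a_i+1,k)}`. -/
def C2 (p1 p2 : List ℕ) (i : ℕ) : List ℕ :=
  shift3 0 p1.length (lrm p2 i) p1 ++
    (p1.length + p2.length + 1) :: shift3 (p1.length - 1) (lrm p2 i + 1) p1.length p2

/-- The decomposition `D(π) = (P(π_ℓ), P(π_r))`, where `π = π_ℓ · (n) · π_r`
with `n` the largest entry of `π`. -/
def D (l : List ℕ) : List ℕ × List ℕ :=
  match l with
  | [] => ([], [])
  | x :: t =>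
    let m := t.foldr max x
    (stand ((x :: t).takeWhile (· ≠ m)), stand (((x :: t).dropWhile (· ≠ m)).tail))

/-! The entry `k + ℓ + 1` of `C2(π1, π2, i)` is its maximum, and the two blocks around it are the
images of `π1` and `π2` under increasing maps (this uses `a_i ≤ ℓ`), so standardizing them gives back
`π1` and `π2`. -/

theorem takeWhile_ne_append_cons_tail_dropWhile {α : Type} [DecidableEq α] {m : α} {l : List α}
    (h : m ∈ l) : l.takeWhile (· ≠ m) ++ m :: (l.dropWhile (· ≠ m)).tail = l := by
  induction l with
  | nil => simp at h
  | cons a t ih =>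
    by_cases ha : a = m
    · simp [ha]
    · have hmt : m ∈ t := (List.mem_cons.1 h).resolve_left (Ne.symm ha)
      simpa [ha] using ih hmt

open List in
theorem S_perm {α : Type} [LinearOrder α] : ∀ l : List α, (S l).Perm l
  | [] => by simp [S]
  | x :: t => by
    rw [S]
    have hm := foldr_max_mem x t
    set m := t.foldr max x
    have hL := S_perm ((x :: t).takeWhile (· ≠ m))
    have hR := S_perm (((x :: t).dropWhile (· ≠ m)).tail)
    calc S ((x :: t).takeWhile (· ≠ m)) ++ S (((x :: t).dropWhile (· ≠ m)).tail) ++ [m]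
        _ ~ (x :: t).takeWhile (· ≠ m) ++ ((x :: t).dropWhile (· ≠ m)).tail ++ [m] :=
          (hL.append hR).append_right _
        _ ~ m :: ((x :: t).takeWhile (· ≠ m) ++ ((x :: t).dropWhile (· ≠ m)).tail) :=
          List.perm_append_singleton _ _
        _ ~ (x :: t).takeWhile (· ≠ m) ++ m :: ((x :: t).dropWhile (· ≠ m)).tail :=
          List.perm_middle.symm
        _ = x :: t := takeWhile_ne_append_cons_tail_dropWhile hm
termination_by l => l.length
decreasing_by
  · exact length_takeWhile_lt hm
  · exact length_tail_dropWhile_lt (List.cons_ne_nil x t)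

theorem le_foldr_max {α : Type} [LinearOrder α] {a x : α} {l : List α} (h : a ∈ x :: l) :
    a ≤ l.foldr max x := by
  induction l with
  | nil => simp_all
  | cons b t ih =>
    simp only [List.mem_cons, List.foldr_cons, le_max_iff] at h ih ⊢
    rcases h with rfl | rfl | h
    · exact Or.inr (ih (Or.inl rfl))
    · exact Or.inl le_rfl
    · exact Or.inr (ih (Or.inr h))

theorem foldr_max_eq_of_mem {α : Type} [LinearOrder α] {m x : α} {l : List α}
    (hm : m ∈ x :: l) (h : ∀ a ∈ x :: l, a ≤ m) : l.foldr max x = m :=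
  le_antisymm (h _ (foldr_max_mem x l)) (le_foldr_max hm)

theorem D_append_cons {A B : List ℕ} {m : ℕ} (hA : ∀ a ∈ A, a < m) (hB : ∀ b ∈ B, b < m) :
    D (A ++ m :: B) = (stand A, stand B) := by
  obtain ⟨x, t, hxt⟩ := List.exists_cons_of_ne_nil
    (List.append_ne_nil_of_right_ne_nil A (List.cons_ne_nil m B))
  have hmax : t.foldr max x = m := by
    refine foldr_max_eq_of_mem (hxt ▸ by simp) fun a ha => ?_
    rw [← hxt] at ha
    rcases List.mem_append.1 ha with ha | ha | ⟨_, ha⟩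
    · exact (hA a ha).le
    · exact le_rfl
    · exact (hB a ha).le
  have hne : ∀ a ∈ A, decide (a ≠ m) = true := fun a ha => decide_eq_true (hA a ha).ne
  rw [hxt]
  simp only [D, hmax]
  rw [← hxt, List.takeWhile_append_of_pos hne, List.dropWhile_append_of_pos hne]
  simp

theorem mem_idPerm {a n : ℕ} : a ∈ idPerm n ↔ 1 ≤ a ∧ a ≤ n := by
  rw [idPerm, List.mem_range'_1]
  omega

theorem countP_le_idPerm (a n : ℕ) : (idPerm n).countP (· ≤ a) = min a n := by
  induction n with
  | zero => simp [idPerm]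
  | succ n ih =>
    rw [idPerm, List.range'_concat, List.countP_append, ← idPerm, ih]
    simp only [List.countP_singleton]
    split_ifs with h <;> simp at h <;> omega

theorem stand_eq_self {n : ℕ} {l : List ℕ} (h : IsPermOf n l) : stand l = l := by
  conv_rhs => rw [← List.map_id l]
  refine List.map_congr_left fun a ha => ?_
  have ha' := mem_idPerm.1 (h.mem_iff.1 ha)
  rw [← List.countP_eq_length_filter, h.countP_eq, countP_le_idPerm, id, min_eq_left ha'.2]

theorem stand_map_of_strictMono {f : ℕ → ℕ} (hf : StrictMono f) (l : List ℕ) :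
    stand (l.map f) = stand l := by
  simp only [stand, List.map_map]
  refine List.map_congr_left fun a _ => ?_
  simp only [Function.comp_def, ← List.countP_eq_length_filter, List.countP_map, hf.le_iff_le]

theorem strictMono_shift3Fun {k1 k2 : ℕ} (m : ℕ) (h : k1 ≤ k2) :
    StrictMono (fun a => if a < m then a + k1 else a + k2) := by
  intro a b hab
  dsimp only
  split_ifs <;> omega

theorem stand_shift3 {k1 k2 : ℕ} (m : ℕ) (h : k1 ≤ k2) (l : List ℕ) :
    stand (shift3 k1 m k2 l) = stand l :=
  stand_map_of_strictMono (strictMono_shift3Fun m h) l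

theorem le_of_mem_shift3 {k1 k2 m n : ℕ} {l : List ℕ} (h : k1 ≤ k2) (hl : ∀ a ∈ l, a ≤ n)
    {b : ℕ} (hb : b ∈ shift3 k1 m k2 l) : b ≤ n + k2 := by
  obtain ⟨a, ha, rfl⟩ := List.mem_map.1 hb
  have := hl a ha
  split_ifs <;> omega

theorem mem_of_mem_lrMaxima {a : ℕ} {l : List ℕ} (h : a ∈ lrMaxima l) : a ∈ l := by
  obtain ⟨j, hj, rfl⟩ := List.mem_map.1 h
  have hj' : j < l.length := List.mem_range.1 (List.mem_filter.1 hj).1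
  rw [List.getD_eq_getElem _ _ hj']
  exact List.getElem_mem hj'

theorem lrm_le {n : ℕ} {p : List ℕ} (hp : IsPermOf n p) (i : ℕ) : lrm p i ≤ n := by
  rcases lt_or_ge (i - 1) (lrMaxima (S p)).length with hi | hi
  · have hmem : lrm p i ∈ p := by
      rw [lrm, List.getD_eq_getElem _ _ hi]
      exact (S_perm p).subset (mem_of_mem_lrMaxima (List.getElem_mem hi))
    exact (mem_idPerm.1 (hp.subset hmem)).2
  · rw [lrm, List.getD_eq_default _ _ hi]
    exact Nat.zero_le n

theorem D_C2_general (π1 π2 : List ℕ) (h1' : Is2SS π1) (h2' : Is2SS π2) (i : ℕ) :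
    D (C2 π1 π2 i) = (π1, π2) := by
  have le_length {l : List ℕ} (hl : Is2SS l) : ∀ a ∈ l, a ≤ l.length :=
    fun a ha => (mem_idPerm.1 (hl.1.subset ha)).2
  have hc := lrm_le h2'.1 i
  have hk : π1.length - 1 ≤ π1.length := Nat.sub_le _ 1
  rw [C2, D_append_cons, stand_shift3 _ (Nat.zero_le _), stand_shift3 _ hk,
    stand_eq_self h1'.1, stand_eq_self h2'.1]
  · intro a ha
    have := le_of_mem_shift3 (Nat.zero_le _) (le_length h1') ha
    omega
  · intro b hb
    have := le_of_mem_shift3 hk (le_length h2') hb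
    omega

/-- For `k, ℓ > 0`, `π1 ∈ T_k`, `π2 ∈ T_ℓ` and `1 ≤ i ≤ slmax(π2)`,
`D(C2(π1, π2, i)) = (π1, π2)`. -/
theorem D_C2 (k ℓ : ℕ) (hk : 0 < k) (hℓ : 0 < ℓ) (π1 π2 : List ℕ)
    (h1 : π1.length = k) (h1' : Is2SS π1) (h2 : π2.length = ℓ) (h2' : Is2SS π2)
    (i : ℕ) (hi1 : 1 ≤ i) (hi2 : i ≤ slmax π2) :
    D (C2 π1 π2 i) = (π1, π2) :=
  D_C2_general π1 π2 h1' h2' i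

end TSP
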